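/- arXiv:1407.2514 — 8 statements merged into one kernel-verified Lean document; each statement's English description precedes it below -/
import Mathlib

section
/- Let K > 0 be a real number and let u be a complex number with Re(u) > 1. Then the bilateral Laplace transform of the call payoff exists and satisfies ∫_{-∞}^{∞} max(e^x - K, 0) · e^{-u x} dx = K^{1-u} / (u(u-1)). -/
open MeasureTheory Complex Set

/-!
For `K > 0` the payoff `(e^x - K)_+` vanishes left of `log K` and equals `e^x - K` right of it,
so the transform is the difference of two exponential integrals over `(log K, ∞)`, both
convergent because `Re (1 - u) < 0` and `Re (-u) < 0`. Each evaluates to a multiple of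
`K^(1-u)`, and `1/(u-1) - 1/u = 1/(u(u-1))`.
-/

lemma ofReal_max_sub_mul_cexp_eq_indicator {K : ℝ} (hK : 0 < K) (u : ℂ) :
    (fun x : ℝ => ((max (Real.exp x - K) 0 : ℝ) : ℂ) * Complex.exp (-u * x)) =
      (Ioi (Real.log K)).indicator
        (fun x : ℝ => Complex.exp ((1 - u) * x) - K * Complex.exp (-u * x)) := by
  funext x
  by_cases hx : x ∈ Ioi (Real.log K)
  · have hKx : K < Real.exp x := (Real.log_lt_iff_lt_exp hK).mp hx
    rw [indicator_of_mem hx, max_eq_left (sub_nonneg.mpr hKx.le)]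
    push_cast
    rw [sub_mul, ← Complex.exp_add]
    ring_nf
  · have hxK : Real.exp x ≤ K := (Real.le_log_iff_exp_le hK).mp (not_lt.mp hx)
    rw [indicator_of_notMem hx, max_eq_right (sub_nonpos.mpr hxK)]
    simp

lemma cexp_mul_ofReal_log {K : ℝ} (hK : 0 < K) (a : ℂ) :
    Complex.exp (a * Real.log K) = (K : ℂ) ^ a := by
  rw [Complex.cpow_def_of_ne_zero (ofReal_ne_zero.mpr hK.ne'), ofReal_log hK.le, mul_comm]

lemma ofReal_mul_cexp_neg_mul_log {K : ℝ} (hK : 0 < K) (u : ℂ) :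
    (K : ℂ) * Complex.exp (-u * Real.log K) = (K : ℂ) ^ (1 - u) := by
  rw [cexp_mul_ofReal_log hK, sub_eq_add_neg,
    Complex.cpow_add _ _ (ofReal_ne_zero.mpr hK.ne'), Complex.cpow_one]

lemma integrableOn_Ioi_cexp_sub {u : ℂ} (hu : 1 < u.re) (c : ℝ) (K : ℂ) :
    IntegrableOn (fun x : ℝ => Complex.exp ((1 - u) * x) - K * Complex.exp (-u * x)) (Ioi c) :=
  (integrableOn_exp_mul_complex_Ioi (by rw [sub_re, one_re]; linarith) c).sub
    ((integrableOn_exp_mul_complex_Ioi (by rw [neg_re]; linarith) c).const_mul K)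

lemma integral_Ioi_log_cexp_sub {K : ℝ} (hK : 0 < K) {u : ℂ} (hu : 1 < u.re) :
    ∫ x in Ioi (Real.log K), Complex.exp ((1 - u) * x) - K * Complex.exp (-u * x) =
      (K : ℂ) ^ (1 - u) / (u * (u - 1)) := by
  have hre₁ : (1 - u).re < 0 := by rw [sub_re, one_re]; linarith
  have hre₂ : (-u).re < 0 := by rw [neg_re]; linarith
  have hu₀ : u ≠ 0 := by rintro rfl; norm_num at hu
  have hu₁ : u - 1 ≠ 0 := by rw [sub_ne_zero]; rintro rfl; norm_num at hu
  rw [integral_sub (integrableOn_exp_mul_complex_Ioi hre₁ _)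
      ((integrableOn_exp_mul_complex_Ioi hre₂ _).const_mul _),
    integral_const_mul, integral_exp_mul_complex_Ioi hre₁, integral_exp_mul_complex_Ioi hre₂,
    neg_div_neg_eq, ← mul_div_assoc, ofReal_mul_cexp_neg_mul_log hK, cexp_mul_ofReal_log hK,
    show (1 : ℂ) - u = -(u - 1) by ring]
  field_simp
  ring

/-- Bilateral Laplace transform of the call payoff: for `K > 0` and `Re u > 1`,
`∫ (e^x - K)_+ e^{-ux} dx = K^{1-u} / (u (u-1))`. -/
theorem call_payoff_laplace_transform (K : ℝ) (hK : 0 < K) (u : ℂ) (hu : 1 < u.re) :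
    Integrable (fun x : ℝ => ((max (Real.exp x - K) 0 : ℝ) : ℂ) * Complex.exp (-u * x)) ∧
    ∫ x : ℝ, ((max (Real.exp x - K) 0 : ℝ) : ℂ) * Complex.exp (-u * x)
      = (K : ℂ) ^ ((1 : ℂ) - u) / (u * (u - 1)) := by
  rw [ofReal_max_sub_mul_cexp_eq_indicator hK u, integral_indicator measurableSet_Ioi,
    integral_Ioi_log_cexp_sub hK hu]
  exact ⟨(integrable_indicator_iff measurableSet_Ioi).mpr (integrableOn_Ioi_cexp_sub hu _ _), rfl⟩
end

section
/- Let K > 0 be a real number and let u be a complex number with Re(u) < 0. Then the bilateral Laplace transform of the put payoff exists and satisfies ∫_{-∞}^{∞} max(K - e^x, 0) · e^{-u x} dx = K^{1-u} / (u(u-1)). -/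
/-! The payoff vanishes for `x > log K` and equals `K - eˣ` below, so the transform splits into
`K ∫_{x ≤ log K} e^{-ux}` minus `∫_{x ≤ log K} e^{(1-u)x}`; both converge because `Re (-u)` and
`Re (1 - u)` are positive, and `e^{w log K} = K^w` turns the sum into the closed form. -/

open MeasureTheory Complex Set

lemma put_payoff_mul_cexp_eq_indicator {K : ℝ} (hK : 0 < K) (u : ℂ) :
    (fun x : ℝ => ((max (K - Real.exp x) 0 : ℝ) : ℂ) * cexp (-u * x)) =
      (Iic (Real.log K)).indicator
        fun x : ℝ => K * cexp (-u * x) - cexp ((1 - u) * x) := by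
  funext x
  by_cases hx : x ≤ Real.log K
  · have hexp : Real.exp x ≤ K := (Real.le_log_iff_exp_le hK).1 hx
    rw [indicator_of_mem (mem_Iic.2 hx), max_eq_left (sub_nonneg.2 hexp), ofReal_sub, sub_mul,
      ofReal_exp, ← Complex.exp_add]
    ring_nf
  · have hexp : K ≤ Real.exp x := (Real.log_le_iff_le_exp hK).1 (not_le.1 hx).le
    rw [indicator_of_notMem (fun h => hx (mem_Iic.1 h)), max_eq_right (sub_nonpos.2 hexp)]
    simp

lemma cexp_mul_log_ofReal {K : ℝ} (hK : 0 < K) (w : ℂ) :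
    cexp (w * Real.log K) = (K : ℂ) ^ w := by
  rw [cpow_def_of_ne_zero (ofReal_ne_zero.2 hK.ne'), ← ofReal_log hK.le, mul_comm]

/-- Bilateral Laplace transform of the put payoff: for `K > 0` and `Re u < 0`,
`∫ (K - e^x)_+ e^{-ux} dx = K^{1-u} / (u (u-1))`. -/
theorem put_payoff_laplace_transform (K : ℝ) (hK : 0 < K) (u : ℂ) (hu : u.re < 0) :
    Integrable (fun x : ℝ => ((max (K - Real.exp x) 0 : ℝ) : ℂ) * Complex.exp (-u * x)) ∧
    ∫ x : ℝ, ((max (K - Real.exp x) 0 : ℝ) : ℂ) * Complex.exp (-u * x)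
      = (K : ℂ) ^ ((1 : ℂ) - u) / (u * (u - 1)) := by
  have hneg : 0 < (-u).re := by simpa using hu
  have hone : 0 < (1 - u).re := by rw [sub_re, one_re]; linarith
  have hstrike := (integrableOn_exp_mul_complex_Iic hneg (Real.log K)).const_mul (K : ℂ)
  have hspot := integrableOn_exp_mul_complex_Iic hone (Real.log K)
  rw [put_payoff_mul_cexp_eq_indicator hK u, integrable_indicator_iff measurableSet_Iic,
    integral_indicator measurableSet_Iic]
  refine ⟨hstrike.sub hspot, ?_⟩
  have hK0 : (K : ℂ) ≠ 0 := ofReal_ne_zero.2 hK.ne'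
  have hu0 : u ≠ 0 := neg_ne_zero.1 (ne_zero_of_re_pos hneg)
  have hu1 : 1 - u ≠ 0 := ne_zero_of_re_pos hone
  have hu1' : u - 1 ≠ 0 := by rw [← neg_sub]; exact neg_ne_zero.2 hu1
  rw [integral_sub hstrike hspot, integral_const_mul, integral_exp_mul_complex_Iic hneg,
    integral_exp_mul_complex_Iic hone, cexp_mul_log_ofReal hK, cexp_mul_log_ofReal hK,
    sub_eq_add_neg (1 : ℂ) u, cpow_add _ _ hK0, cpow_one, ← sub_eq_add_neg]
  field_simp
  ring
end

section
/- Let K > 0 be a real number and let u be a complex number with 0 < Re(u) < 1. Then the bilateral Laplace transform of the covered-call payoff exists and satisfies ∫_{-∞}^{∞} (max(e^x - K, 0) - e^x) · e^{-u x} dx = K^{1-u} / (u(u-1)). -/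
/-!
Below the strike, `x ≤ log K`, the call is worthless and the integrand is `-e^{(1-u)x}`; above it
the integrand is `-K e^{-ux}`. Each half is the integral of a complex exponential over a half-line,
convergent precisely because `0 < Re u < 1`, and the two halves add up to
`-K^{1-u}/(1-u) - K^{1-u}/u = K^{1-u}/(u(u-1))`.
-/

open MeasureTheory Complex Set

noncomputable def coveredCallIntegrand (K : ℝ) (u : ℂ) (x : ℝ) : ℂ :=
  ((max (Real.exp x - K) 0 - Real.exp x : ℝ) : ℂ) * Complex.exp (-u * x)

lemma ofReal_cpow_eq_exp_mul_log {K : ℝ} (hK : 0 < K) (w : ℂ) :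
    (K : ℂ) ^ w = Complex.exp (w * Real.log K) := by
  rw [cpow_def_of_ne_zero (by exact_mod_cast hK.ne'), ← ofReal_log hK.le, mul_comm]

section

variable {K : ℝ} {u : ℂ}

lemma coveredCallIntegrand_eqOn_Iic (hK : 0 < K) (u : ℂ) :
    EqOn (coveredCallIntegrand K u) (fun x => -Complex.exp ((1 - u) * x))
      (Iic (Real.log K)) := by
  intro x hx
  have hpay : max (Real.exp x - K) 0 = 0 :=
    max_eq_right (sub_nonpos.2 ((Real.le_log_iff_exp_le hK).1 hx))
  simp only [coveredCallIntegrand, hpay, zero_sub, ofReal_neg, ofReal_exp]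
  rw [sub_mul, one_mul, sub_eq_add_neg, ← neg_mul, Complex.exp_add]
  ring

lemma coveredCallIntegrand_eqOn_Ioi (hK : 0 < K) (u : ℂ) :
    EqOn (coveredCallIntegrand K u) (fun x => -K * Complex.exp (-u * x))
      (Ioi (Real.log K)) := by
  intro x hx
  have hpay : max (Real.exp x - K) 0 = Real.exp x - K :=
    max_eq_left (sub_nonneg.2 ((Real.log_lt_iff_lt_exp hK).1 hx).le)
  simp only [coveredCallIntegrand, hpay]
  push_cast
  ring

lemma integrableOn_coveredCallIntegrand_Iic (hK : 0 < K) (hu1 : u.re < 1) :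
    IntegrableOn (coveredCallIntegrand K u) (Iic (Real.log K)) :=
  ((integrableOn_exp_mul_complex_Iic (by simpa using hu1) _).neg).congr_fun
    (coveredCallIntegrand_eqOn_Iic hK u).symm measurableSet_Iic

lemma integrableOn_coveredCallIntegrand_Ioi (hK : 0 < K) (hu0 : 0 < u.re) :
    IntegrableOn (coveredCallIntegrand K u) (Ioi (Real.log K)) :=
  IntegrableOn.congr_fun
    ((integrableOn_exp_mul_complex_Ioi (a := -u) (by simpa using hu0) _).const_mul (-K : ℂ))
    (coveredCallIntegrand_eqOn_Ioi hK u).symm measurableSet_Ioi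

lemma setIntegral_coveredCallIntegrand_Iic (hK : 0 < K) (hu1 : u.re < 1) :
    ∫ x in Iic (Real.log K), coveredCallIntegrand K u x = -(K : ℂ) ^ (1 - u) / (1 - u) := by
  rw [setIntegral_congr_fun measurableSet_Iic (coveredCallIntegrand_eqOn_Iic hK u), integral_neg,
    integral_exp_mul_complex_Iic (by simpa using hu1), ofReal_cpow_eq_exp_mul_log hK, neg_div]

lemma setIntegral_coveredCallIntegrand_Ioi (hK : 0 < K) (hu0 : 0 < u.re) :
    ∫ x in Ioi (Real.log K), coveredCallIntegrand K u x = -(K : ℂ) ^ (1 - u) / u := by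
  rw [setIntegral_congr_fun measurableSet_Ioi (coveredCallIntegrand_eqOn_Ioi hK u),
    integral_const_mul, integral_exp_mul_complex_Ioi (by simpa using hu0),
    ofReal_cpow_eq_exp_mul_log hK, sub_mul, one_mul, sub_eq_add_neg, Complex.exp_add,
    ← ofReal_exp, Real.exp_log hK]
  have hu : u ≠ 0 := fun h => by simp [h] at hu0
  field_simp

lemma integrable_coveredCallIntegrand (hK : 0 < K) (hu0 : 0 < u.re) (hu1 : u.re < 1) :
    Integrable (coveredCallIntegrand K u) := by
  rw [← integrableOn_univ, ← Iic_union_Ioi (a := Real.log K)]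
  exact (integrableOn_coveredCallIntegrand_Iic hK hu1).union
    (integrableOn_coveredCallIntegrand_Ioi hK hu0)

lemma integral_coveredCallIntegrand (hK : 0 < K) (hu0 : 0 < u.re) (hu1 : u.re < 1) :
    ∫ x, coveredCallIntegrand K u x = (K : ℂ) ^ (1 - u) / (u * (u - 1)) := by
  rw [← intervalIntegral.integral_Iic_add_Ioi (integrableOn_coveredCallIntegrand_Iic hK hu1)
    (integrableOn_coveredCallIntegrand_Ioi hK hu0), setIntegral_coveredCallIntegrand_Iic hK hu1,
    setIntegral_coveredCallIntegrand_Ioi hK hu0]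
  have hu : u ≠ 0 := fun h => by simp [h] at hu0
  have hu_sub : u - 1 ≠ 0 := fun h => by simp [sub_eq_zero.1 h] at hu1
  have hsub_u : 1 - u ≠ 0 := fun h => hu_sub (by linear_combination -h)
  field_simp
  ring

end

/-- Bilateral Laplace transform of the covered-call payoff: for `K > 0` and
`0 < Re u < 1`, `∫ ((e^x - K)_+ - e^x) e^{-ux} dx = K^{1-u} / (u (u-1))`. -/
theorem covered_call_payoff_laplace_transform (K : ℝ) (hK : 0 < K) (u : ℂ)
    (hu0 : 0 < u.re) (hu1 : u.re < 1) :
    Integrable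
      (fun x : ℝ => ((max (Real.exp x - K) 0 - Real.exp x : ℝ) : ℂ) * Complex.exp (-u * x)) ∧
    ∫ x : ℝ, ((max (Real.exp x - K) 0 - Real.exp x : ℝ) : ℂ) * Complex.exp (-u * x)
      = (K : ℂ) ^ ((1 : ℂ) - u) / (u * (u - 1)) :=
  ⟨integrable_coveredCallIntegrand hK hu0 hu1, integral_coveredCallIntegrand hK hu0 hu1⟩
end

section
/- Let K > 0 and a > 1 be real numbers. Then for every real x, the function t ↦ K^{1-(a+it)} · e^{(a+it)x} / ((a+it)(a+it-1)) is Lebesgue integrable over ℝ and (1/(2π)) · ∫_{-∞}^{∞} K^{1-(a+it)} · e^{(a+it)x} / ((a+it)(a+it-1)) dt = max(e^x - K, 0), where i is the imaginary unit and the left-hand side is a complex integral whose value is the real number on the right. -/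
/-!
Put `y = e^{-x}`. Then `e^{sx} = y^{-s}`, and `K^{1-s} / (s (s - 1))` is, for `Re s > 1`, the
Mellin transform of `y ↦ (1/y - K)_+`: that function vanishes for `y ≥ 1/K`, so the transform is
`∫₀^{1/K} (y^{s-2} - K y^{s-1}) dy = K^{1-s} (1/(s-1) - 1/s)`. The claimed identity is therefore
Mellin inversion on the line `Re s = a`, which applies since the payoff is continuous at `y > 0`
and the transform decays like `|s|⁻²` on vertical lines.
-/

open MeasureTheory Complex Set

noncomputable def invCallPayoff (K : ℝ) (y : ℝ) : ℂ := ((max (y⁻¹ - K) 0 : ℝ) : ℂ)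

lemma continuousAt_invCallPayoff (K : ℝ) {y : ℝ} (hy : y ≠ 0) :
    ContinuousAt (invCallPayoff K) y := by
  unfold invCallPayoff
  fun_prop (disch := exact hy)

lemma invCallPayoff_exp_neg (K x : ℝ) :
    invCallPayoff K (Real.exp (-x)) = ((max (Real.exp x - K) 0 : ℝ) : ℂ) := by
  simp [invCallPayoff, Real.exp_neg]

lemma invCallPayoff_of_inv_le {K y : ℝ} (hK : 0 < K) (hy : K⁻¹ ≤ y) :
    invCallPayoff K y = 0 := by
  have : y⁻¹ ≤ K := by rwa [inv_le_comm₀ ((inv_pos.mpr hK).trans_le hy) hK]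
  simp [invCallPayoff, this]

lemma cpow_sub_one_mul_invCallPayoff {K y : ℝ} (hK : 0 < K) (hy : 0 < y) (hyK : y ≤ K⁻¹)
    (s : ℂ) :
    (y : ℂ) ^ (s - 1) * invCallPayoff K y = (y : ℂ) ^ (s - 2) - K * (y : ℂ) ^ (s - 1) := by
  have hKy : K ≤ y⁻¹ := by rwa [le_inv_comm₀ hK hy]
  have hpow : (y : ℂ) ^ (s - 2) = (y : ℂ) ^ (s - 1) * (y : ℂ)⁻¹ := by
    rw [show s - 2 = (s - 1) - 1 by ring, cpow_sub _ _ (by exact_mod_cast hy.ne'), cpow_one,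
      div_eq_mul_inv]
  rw [invCallPayoff, max_eq_left (sub_nonneg.mpr hKy), hpow]
  push_cast
  ring

lemma integral_cpow_sub_two_sub_mul_cpow_sub_one {K : ℝ} (hK : 0 < K) {s : ℂ} (hs : 1 < s.re) :
    ∫ y in (0 : ℝ)..K⁻¹, ((y : ℂ) ^ (s - 2) - K * (y : ℂ) ^ (s - 1)) =
      (K : ℂ) ^ (1 - s) / (s * (s - 1)) := by
  have hs0 : s ≠ 0 := ne_of_apply_ne re (by simp; linarith)
  have hs1 : s - 1 ≠ 0 := ne_of_apply_ne re (by simp; linarith)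
  have hK0 : (K : ℂ) ≠ 0 := by exact_mod_cast hK.ne'
  have hKinv (w : ℂ) : ((K⁻¹ : ℝ) : ℂ) ^ w = (K : ℂ) ^ (-w) := by
    rw [ofReal_inv, inv_cpow _ _ (by simp [arg_ofReal_of_nonneg hK.le, Real.pi_ne_zero.symm]),
      cpow_neg]
  have hKpow : (K : ℂ) ^ (1 - s) = K * (K : ℂ) ^ (-s) := by
    rw [cpow_sub _ _ hK0, cpow_one, cpow_neg, div_eq_mul_inv]
  rw [intervalIntegral.integral_sub (intervalIntegral.intervalIntegrable_cpow' (by simp; linarith))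
      ((intervalIntegral.intervalIntegrable_cpow' (by simp; linarith)).const_mul _),
    intervalIntegral.integral_const_mul, integral_cpow (Or.inl (by simp; linarith)),
    integral_cpow (Or.inl (by simp; linarith)), show s - 2 + 1 = s - 1 by ring, sub_add_cancel,
    hKinv, hKinv, neg_sub, hKpow, ofReal_zero, zero_cpow hs1, zero_cpow hs0]
  field_simp
  ring

lemma mellin_invCallPayoff {K : ℝ} (hK : 0 < K) {s : ℂ} (hs : 1 < s.re) :
    MellinConvergent (invCallPayoff K) s ∧
      mellin (invCallPayoff K) s = (K : ℂ) ^ (1 - s) / (s * (s - 1)) := by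
  have hvanish : ∀ y ∈ Ioi 0 \ Ioc 0 K⁻¹, (y : ℂ) ^ (s - 1) • invCallPayoff K y = 0 := by
    rintro y ⟨hy, hyK⟩
    rw [invCallPayoff_of_inv_le hK (not_le.mp fun h => hyK ⟨hy, h⟩).le, smul_zero]
  have hpower : EqOn (fun y : ℝ => (y : ℂ) ^ (s - 1) • invCallPayoff K y)
      (fun y : ℝ => (y : ℂ) ^ (s - 2) - K * (y : ℂ) ^ (s - 1)) (Ioc 0 K⁻¹) :=
    fun y hy => cpow_sub_one_mul_invCallPayoff hK hy.1 hy.2 s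
  have hint : IntegrableOn (fun y : ℝ => (y : ℂ) ^ (s - 2) - K * (y : ℂ) ^ (s - 1))
      (Ioc 0 K⁻¹) := by
    rw [← intervalIntegrable_iff_integrableOn_Ioc_of_le (by positivity)]
    exact (intervalIntegral.intervalIntegrable_cpow' (by simp; linarith)).sub
      ((intervalIntegral.intervalIntegrable_cpow' (by simp; linarith)).const_mul _)
  refine ⟨(hint.congr_fun hpower.symm measurableSet_Ioc).of_forall_sdiff_eq_zero
    measurableSet_Ioi hvanish, ?_⟩
  rw [mellin, setIntegral_eq_of_subset_of_forall_sdiff_eq_zero measurableSet_Ioi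
    Ioc_subset_Ioi_self hvanish, setIntegral_congr_fun measurableSet_Ioc hpower,
    ← intervalIntegral.integral_of_le (by positivity),
    integral_cpow_sub_two_sub_mul_cpow_sub_one hK hs]

lemma integrable_inv_sq_add_sq {c : ℝ} (hc : c ≠ 0) :
    Integrable fun y : ℝ => (c ^ 2 + y ^ 2)⁻¹ := by
  refine ((integrable_inv_one_add_sq.comp_div hc).const_mul (c ^ 2)⁻¹).congr
    (Filter.Eventually.of_forall fun y => ?_)
  field_simp

lemma verticalIntegrable_cpow_one_sub_div {K σ : ℝ} (hK : 0 < K) (hσ : 1 < σ) :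
    VerticalIntegrable (fun s : ℂ => (K : ℂ) ^ (1 - s) / (s * (s - 1))) σ := by
  have hσ1 : σ - 1 ≠ 0 := by linarith
  refine ((integrable_inv_sq_add_sq hσ1).const_mul (K ^ (1 - σ))).mono' ?_
    (Filter.Eventually.of_forall fun y => ?_)
  · have hK0 : (K : ℂ) ≠ 0 := by exact_mod_cast hK.ne'
    refine (Continuous.div ((by fun_prop : Continuous fun y : ℝ => 1 - (σ + y * I)).const_cpow
      (Or.inl hK0)) (by fun_prop) fun y => mul_ne_zero ?_ ?_).aestronglyMeasurable
    · exact ne_of_apply_ne re (by simp; linarith)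
    · exact ne_of_apply_ne re (by simp; linarith)
  · set s : ℂ := σ + y * I
    have hnorm_sub : ‖s - 1‖ ^ 2 = (σ - 1) ^ 2 + y ^ 2 := by
      rw [Complex.sq_norm, normSq_apply]; simp [s]; ring
    have hnorm_le : ‖s - 1‖ ≤ ‖s‖ := by
      rw [← sq_le_sq₀ (norm_nonneg _) (norm_nonneg _), hnorm_sub, Complex.sq_norm, normSq_apply]
      simp [s]
      nlinarith
    rw [norm_div, norm_mul, norm_cpow_eq_rpow_re_of_pos hK, ← hnorm_sub, div_eq_mul_inv]
    have hre : (1 - s).re = 1 - σ := by simp [s]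
    rw [hre]
    gcongr
    · rw [hnorm_sub]; positivity
    · rw [sq]; exact mul_le_mul_of_nonneg_right hnorm_le (norm_nonneg _)

lemma ofReal_exp_neg_cpow_neg (x : ℝ) (s : ℂ) :
    ((Real.exp (-x) : ℝ) : ℂ) ^ (-s) = cexp (s * x) := by
  rw [cpow_def_of_ne_zero (by exact_mod_cast (Real.exp_pos _).ne'),
    ← ofReal_log (Real.exp_pos _).le, Real.log_exp]
  push_cast
  ring_nf

lemma Complex.VerticalIntegrable.integrable_cpow_neg_smul {E : Type*} [NormedAddCommGroup E]
    [NormedSpace ℂ E] {F : ℂ → E} {σ : ℝ} (hF : VerticalIntegrable F σ) {y : ℝ}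
    (hy : 0 < y) :
    Integrable fun t : ℝ => (y : ℂ) ^ (-(σ + t * I)) • F (σ + t * I) := by
  refine hF.bdd_smul (y ^ (-σ)) ?_ (Filter.Eventually.of_forall fun t => ?_)
  · exact ((by fun_prop : Continuous fun t : ℝ => -(σ + t * I)).const_cpow
      (Or.inl (by exact_mod_cast hy.ne'))).aestronglyMeasurable
  · simp [norm_cpow_eq_rpow_re_of_pos hy]

/-- Bromwich inversion for the call payoff: for `K > 0`, `a > 1` and every real `x`,
`(1/(2π)) ∫ K^{1-(a+it)} e^{(a+it)x} / ((a+it)(a+it-1)) dt = (e^x - K)_+`. -/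
theorem call_payoff_laplace_inversion (K a : ℝ) (hK : 0 < K) (ha : 1 < a) (x : ℝ) :
    Integrable (fun t : ℝ =>
      (K : ℂ) ^ ((1 : ℂ) - ((a : ℂ) + t * Complex.I)) *
        Complex.exp (((a : ℂ) + t * Complex.I) * x) /
        (((a : ℂ) + t * Complex.I) * (((a : ℂ) + t * Complex.I) - 1))) ∧
    (1 / (2 * Real.pi) : ℂ) * ∫ t : ℝ,
        (K : ℂ) ^ ((1 : ℂ) - ((a : ℂ) + t * Complex.I)) *
          Complex.exp (((a : ℂ) + t * Complex.I) * x) /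
          (((a : ℂ) + t * Complex.I) * (((a : ℂ) + t * Complex.I) - 1))
      = ((max (Real.exp x - K) 0 : ℝ) : ℂ) := by
  have hmellin (t : ℝ) := (mellin_invCallPayoff hK (s := a + t * I) (by simpa)).2
  have hFf : VerticalIntegrable (mellin (invCallPayoff K)) a :=
    (verticalIntegrable_cpow_one_sub_div hK ha).congr
      (Filter.Eventually.of_forall fun t => (hmellin t).symm)
  have hintegrand : (fun t : ℝ => (K : ℂ) ^ (1 - (a + t * I)) * cexp ((a + t * I) * x) /
      ((a + t * I) * (a + t * I - 1))) = fun t : ℝ =>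
      ((Real.exp (-x) : ℝ) : ℂ) ^ (-(a + t * I)) • mellin (invCallPayoff K) (a + t * I) := by
    ext t
    rw [hmellin, ofReal_exp_neg_cpow_neg, smul_eq_mul]
    ring
  have hinversion := mellinInv_mellin_eq a (invCallPayoff K) (Real.exp_pos (-x))
    (mellin_invCallPayoff hK (by simpa)).1 hFf
    (continuousAt_invCallPayoff K (Real.exp_pos _).ne')
  rw [mellinInv, invCallPayoff_exp_neg, real_smul] at hinversion
  rw [hintegrand, ← hinversion]
  exact ⟨hFf.integrable_cpow_neg_smul (Real.exp_pos _), by push_cast; rfl⟩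
end

section
/- Let K > 0 and c < 0 be real numbers. Then for every real x, the function t ↦ K^{1-(c+it)} · e^{(c+it)x} / ((c+it)(c+it-1)) is Lebesgue integrable over ℝ and (1/(2π)) · ∫_{-∞}^{∞} K^{1-(c+it)} · e^{(c+it)x} / ((c+it)(c+it-1)) dt = max(K - e^x, 0), where i is the imaginary unit and the left-hand side is a complex integral whose value is the real number on the right. -/
/-!
Put `y = e^x` and `s = -(c + it)`, so that `Re s = -c > 0`. The integrand is then
`y^{-s} K^{s+1} / (s (s+1))`, and `K^{s+1} / (s (s+1)) = ∫₀^K (K - y) y^{s-1} dy` is the Mellin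
transform of the put payoff `(K - y)_+`. The claim is therefore Mellin inversion for this payoff on
the line `Re s = -c`, which applies because the payoff is continuous, bounded near `0` and vanishes
beyond `K`, while its transform decays like `t^{-2}` along the line.
-/

open MeasureTheory Complex Set Filter Asymptotics

noncomputable def putPayoff (K : ℝ) (y : ℝ) : ℂ := ((max (K - y) 0 : ℝ) : ℂ)

lemma continuous_putPayoff (K : ℝ) : Continuous (putPayoff K) := by
  unfold putPayoff; fun_prop

lemma putPayoff_of_le {K y : ℝ} (h : K ≤ y) : putPayoff K y = 0 := by
  simp [putPayoff, h]

lemma putPayoff_of_ge {K y : ℝ} (h : y ≤ K) : putPayoff K y = K - y := by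
  simp [putPayoff, h]

lemma mellinConvergent_putPayoff (K : ℝ) {s : ℂ} (hs : 0 < s.re) :
    MellinConvergent (putPayoff K) s := by
  refine mellinConvergent_of_isBigO_rpow (a := s.re + 1) (b := 0)
    ((continuous_putPayoff K).locallyIntegrable.locallyIntegrableOn _) ?_ (lt_add_one _) ?_ hs
  · exact EventuallyEq.trans_isBigO ((eventually_ge_atTop K).mono fun y hy => putPayoff_of_le hy)
      (isBigO_zero _ _)
  · simpa using ((continuous_putPayoff K).tendsto 0).mono_left nhdsWithin_le_nhds |>.isBigO_one ℝ

lemma mellin_putPayoff {K : ℝ} (hK : 0 < K) {s : ℂ} (hs : 0 < s.re) :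
    mellin (putPayoff K) s = (K : ℂ) ^ (s + 1) / (s * (s + 1)) := by
  have hs0 : s ≠ 0 := ne_zero_of_re_pos hs
  have hs1 : s + 1 ≠ 0 := ne_zero_of_re_pos (by rw [add_re, one_re]; linarith)
  have hK0 : (K : ℂ) ≠ 0 := by exact_mod_cast hK.ne'
  have hsupp :
      mellin (putPayoff K) s = ∫ t in 0..K, (K * (t : ℂ) ^ (s - 1) - (t : ℂ) ^ s) := by
    rw [mellin, intervalIntegral.integral_of_le hK.le,
      setIntegral_eq_of_subset_of_forall_sdiff_eq_zero measurableSet_Ioi Ioc_subset_Ioi_self]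
    · refine setIntegral_congr_fun measurableSet_Ioc fun t ⟨ht0, htK⟩ => ?_
      have ht : (t : ℂ) ≠ 0 := by exact_mod_cast ht0.ne'
      rw [putPayoff_of_ge htK, smul_eq_mul, cpow_sub _ _ ht, cpow_one]
      field_simp
    · rintro t ⟨ht0, htK⟩
      rw [putPayoff_of_le (le_of_lt (by simpa [mem_Ioi.mp ht0] using htK)), smul_zero]
  have hre : -1 < (s - 1).re := by rw [sub_re, one_re]; linarith
  rw [hsupp,
    intervalIntegral.integral_sub ((intervalIntegral.intervalIntegrable_cpow' hre).const_mul _)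
      (intervalIntegral.intervalIntegrable_cpow' (by linarith)),
    intervalIntegral.integral_const_mul,
    integral_cpow (Or.inl hre), integral_cpow (Or.inl (by linarith)), sub_add_cancel, ofReal_zero,
    zero_cpow hs0, zero_cpow hs1, cpow_add _ _ hK0, cpow_one]
  field_simp
  ring

lemma norm_inv_mul_add_one_le {σ : ℝ} (hσ : 0 < σ) (t : ℝ) :
    ‖((σ + t * I) * (σ + t * I + 1))⁻¹‖ ≤ (min σ 1)⁻¹ * (1 + t ^ 2)⁻¹ := by
  set m := min σ 1
  have hm : 0 < m := lt_min hσ one_pos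
  have hnorm : ‖(σ : ℂ) + t * I‖ ^ 2 = σ ^ 2 + t ^ 2 := by
    rw [Complex.sq_norm, normSq_add_mul_I]
  have hnorm' : ‖(σ : ℂ) + t * I + 1‖ ^ 2 = (σ + 1) ^ 2 + t ^ 2 := by
    rw [show (σ : ℂ) + t * I + 1 = ((σ + 1 : ℝ) : ℂ) + t * I by push_cast; ring,
      Complex.sq_norm, normSq_add_mul_I]
  have hlower : m * (1 + t ^ 2) ≤ ‖(σ : ℂ) + t * I‖ * ‖(σ : ℂ) + t * I + 1‖ := by
    refine le_of_pow_le_pow_left₀ two_ne_zero (by positivity) ?_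
    have hmσ : m ≤ σ := min_le_left _ _
    have hm1 : m ≤ 1 := min_le_right _ _
    have hm2σ : m ^ 2 ≤ σ ^ 2 := pow_le_pow_left₀ hm.le hmσ 2
    have hm21 : m ^ 2 ≤ 1 := by nlinarith
    rw [mul_pow, mul_pow, hnorm, hnorm', sq (1 + t ^ 2), ← mul_assoc]
    exact mul_le_mul (by nlinarith [mul_le_mul_of_nonneg_right hm21 (sq_nonneg t)]) (by nlinarith)
      (by positivity) (by positivity)
  rw [norm_inv, norm_mul, ← mul_inv]
  exact inv_anti₀ (by positivity) hlower

lemma verticalIntegrable_mellin_putPayoff {K : ℝ} (hK : 0 < K) {σ : ℝ} (hσ : 0 < σ) :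
    VerticalIntegrable (mellin (putPayoff K)) σ := by
  have hclosed : (fun y : ℝ => mellin (putPayoff K) (σ + y * I)) =
      fun y : ℝ => (K : ℂ) ^ (σ + y * I + 1) * ((σ + y * I) * (σ + y * I + 1))⁻¹ := by
    ext y
    rw [mellin_putPayoff hK (by simpa using hσ), div_eq_mul_inv]
  have hcont : Continuous fun y : ℝ =>
      (K : ℂ) ^ (σ + y * I + 1) * ((σ + y * I) * (σ + y * I + 1))⁻¹ :=
    (Continuous.const_cpow (by fun_prop) (Or.inl (by exact_mod_cast hK.ne'))).mul
      (Continuous.inv₀ (by fun_prop) fun y => mul_ne_zero (ne_zero_of_re_pos (by simpa using hσ))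
        (ne_zero_of_re_pos (by simpa using hσ.trans (lt_add_one σ))))
  unfold VerticalIntegrable
  rw [hclosed]
  refine (integrable_inv_one_add_sq.const_mul (K ^ (σ + 1) * (min σ 1)⁻¹)).mono'
    hcont.aestronglyMeasurable (.of_forall fun y => ?_)
  rw [norm_mul, norm_cpow_eq_rpow_re_of_pos hK, mul_assoc]
  simp only [add_re, ofReal_re, mul_re, I_re, mul_zero, ofReal_im, I_im, mul_one, sub_self,
    add_zero, one_re]
  gcongr
  exact norm_inv_mul_add_one_le hσ y

lemma integrable_mellinInv_integrand {E : Type*} [NormedAddCommGroup E] [NormedSpace ℂ E]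
    {f : ℂ → E} {σ : ℝ} (hf : VerticalIntegrable f σ) {x : ℝ} (hx : 0 < x) :
    Integrable fun y : ℝ => (x : ℂ) ^ (-(σ + y * I)) • f (σ + y * I) := by
  have hcont : Continuous fun y : ℝ => (x : ℂ) ^ (-(σ + y * I)) :=
    Continuous.const_cpow (by fun_prop) (Or.inl (by exact_mod_cast hx.ne'))
  refine (hf.norm.const_mul (x ^ (-σ))).mono' (hcont.aestronglyMeasurable.smul hf.1)
    (.of_forall fun y => ?_)
  rw [norm_smul, norm_cpow_eq_rpow_re_of_pos hx]
  simp

lemma bromwich_integrand_eq_mellinInv_integrand_neg {K c : ℝ} (hK : 0 < K) (hc : c < 0)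
    (x t : ℝ) :
    (K : ℂ) ^ ((1 : ℂ) - ((c : ℂ) + t * I)) * Complex.exp (((c : ℂ) + t * I) * x) /
        (((c : ℂ) + t * I) * (((c : ℂ) + t * I) - 1)) =
      ((Real.exp x : ℝ) : ℂ) ^ (-(((-c : ℝ) : ℂ) + ((-t : ℝ) : ℂ) * I)) •
        mellin (putPayoff K) (((-c : ℝ) : ℂ) + ((-t : ℝ) : ℂ) * I) := by
  set u : ℂ := (c : ℂ) + t * I
  have hs : ((-c : ℝ) : ℂ) + ((-t : ℝ) : ℂ) * I = -u := by push_cast; ring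
  have hexp : ((Real.exp x : ℝ) : ℂ) ^ u = Complex.exp (u * x) := by
    rw [cpow_def_of_ne_zero (by exact_mod_cast (Real.exp_pos x).ne'),
      ← ofReal_log (Real.exp_pos x).le, Real.log_exp, mul_comm]
  rw [hs, mellin_putPayoff hK (by simpa [u] using hc), neg_neg, smul_eq_mul, hexp,
    show -u * (-u + 1) = u * (u - 1) by ring, neg_add_eq_sub]
  ring

lemma mellinInv_eq_integral_neg {E : Type*} [NormedAddCommGroup E] [NormedSpace ℂ E]
    (σ : ℝ) (f : ℂ → E) (x : ℝ) :
    mellinInv σ f x = (1 / (2 * Real.pi)) •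
      ∫ t : ℝ, (x : ℂ) ^ (-(σ + ((-t : ℝ) : ℂ) * I)) • f (σ + ((-t : ℝ) : ℂ) * I) := by
  rw [mellinInv,
    integral_neg_eq_self (fun y : ℝ => (x : ℂ) ^ (-(σ + y * I)) • f (σ + y * I))]

/-- Bromwich inversion for the put payoff: for `K > 0`, `c < 0` and every real `x`,
`(1/(2π)) ∫ K^{1-(c+it)} e^{(c+it)x} / ((c+it)(c+it-1)) dt = (K - e^x)_+`. -/
theorem put_payoff_laplace_inversion (K c : ℝ) (hK : 0 < K) (hc : c < 0) (x : ℝ) :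
    Integrable (fun t : ℝ =>
      (K : ℂ) ^ ((1 : ℂ) - ((c : ℂ) + t * Complex.I)) *
        Complex.exp (((c : ℂ) + t * Complex.I) * x) /
        (((c : ℂ) + t * Complex.I) * (((c : ℂ) + t * Complex.I) - 1))) ∧
    (1 / (2 * Real.pi) : ℂ) * ∫ t : ℝ,
        (K : ℂ) ^ ((1 : ℂ) - ((c : ℂ) + t * Complex.I)) *
          Complex.exp (((c : ℂ) + t * Complex.I) * x) /
          (((c : ℂ) + t * Complex.I) * (((c : ℂ) + t * Complex.I) - 1))
      = ((max (K - Real.exp x) 0 : ℝ) : ℂ) := by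
  have hσ : 0 < -c := neg_pos.mpr hc
  have hvert := verticalIntegrable_mellin_putPayoff hK hσ
  have hinv := mellinInv_mellin_eq (-c) (putPayoff K) (Real.exp_pos x)
    (mellinConvergent_putPayoff K (by simpa using hσ)) hvert (continuous_putPayoff K).continuousAt
  simp_rw [bromwich_integrand_eq_mellinInv_integrand_neg hK hc x]
  refine ⟨(integrable_mellinInv_integrand hvert (Real.exp_pos x)).comp_neg, ?_⟩
  rw [mellinInv_eq_integral_neg, real_smul, putPayoff] at hinv
  exact_mod_cast hinv
end

section
/- Fix real numbers λ, θ, ζ, ρ, u, T with ζ ≠ 0 and T > 0. Let y₁, y₂ : ℝ → ℝ be twice differentiable solutions of the linear second-order equation y''(t) + (λ - ρζut/T)·y'(t) + (ζ²/4)·(ut/T)·(ut/T - 1)·y(t) = 0 on [0, T], and set w(t) := y₂'(0)·y₁(t) - y₁'(0)·y₂(t). If w(t) ≠ 0 for all t ∈ [0, T], then ψ(t) := -(2/ζ²)·w'(t)/w(t) satisfies ψ(0) = 0 and the Heston average-price Riccati equation ψ'(t) = (ζ²/2)·ψ(t)² - (λ - ρζut/T)·ψ(t) + (1/2)·(ut/T)·(ut/T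 - 1) for all t ∈ [0, T]. -/
/-!
A nonvanishing solution `w` of the linear equation `w'' + p w' + q w = 0` turns into a solution
of a Riccati equation under the logarithmic derivative: `v = w'/w` satisfies
`v' = -v² - p v - q`, and rescaling `ψ = -c v` gives `ψ' = c⁻¹ ψ² - p ψ + c q`. With `c = 2/ζ²`
this is the Heston Riccati equation. The combination `w = y₂'(0) y₁ - y₁'(0) y₂` solves the linear
equation by superposition, and `w'(0) = 0` by construction, whence `ψ(0) = 0`.
-/

open Set

section LinearODE

variable {s : Set ℝ} {t p q : ℝ} {w w' w'' : ℝ → ℝ}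

theorem HasDerivWithinAt.logDeriv_riccati_of_linearODE
    (hw : HasDerivWithinAt w (w' t) s t) (hw' : HasDerivWithinAt w' (w'' t) s t)
    (hne : w t ≠ 0) (hode : w'' t + p * w' t + q * w t = 0) :
    HasDerivWithinAt (fun x => w' x / w x) (-(w' t / w t) ^ 2 - p * (w' t / w t) - q) s t := by
  refine (hw'.div hw hne).congr_deriv ?_
  field_simp
  linear_combination w t * hode

theorem HasDerivWithinAt.scaled_logDeriv_riccati_of_linearODE (c : ℝ)
    (hw : HasDerivWithinAt w (w' t) s t) (hw' : HasDerivWithinAt w' (w'' t) s t)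
    (hne : w t ≠ 0) (hode : w'' t + p * w' t + q * w t = 0) :
    HasDerivWithinAt (fun x => -c * (w' x / w x))
      (c⁻¹ * (-c * (w' t / w t)) ^ 2 - p * (-c * (w' t / w t)) + c * q) s t := by
  refine ((hw.logDeriv_riccati_of_linearODE hw' hne hode).const_mul (-c)).congr_deriv ?_
  rcases eq_or_ne c 0 with rfl | hc
  · simp
  · field_simp
    ring

end LinearODE

theorem heston_average_price_riccati_general
    (lam ζ ρ u T : ℝ) (hζ : ζ ≠ 0)
    (y₁ y₁' y₁'' y₂ y₂' y₂'' : ℝ → ℝ)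
    (hy₁ : ∀ t ∈ Icc (0 : ℝ) T, HasDerivWithinAt y₁ (y₁' t) (Icc 0 T) t)
    (hy₁' : ∀ t ∈ Icc (0 : ℝ) T, HasDerivWithinAt y₁' (y₁'' t) (Icc 0 T) t)
    (hy₂ : ∀ t ∈ Icc (0 : ℝ) T, HasDerivWithinAt y₂ (y₂' t) (Icc 0 T) t)
    (hy₂' : ∀ t ∈ Icc (0 : ℝ) T, HasDerivWithinAt y₂' (y₂'' t) (Icc 0 T) t)
    (hode₁ : ∀ t ∈ Icc (0 : ℝ) T,
      y₁'' t + (lam - ρ * ζ * u * t / T) * y₁' t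
        + (ζ ^ 2 / 4) * (u * t / T) * (u * t / T - 1) * y₁ t = 0)
    (hode₂ : ∀ t ∈ Icc (0 : ℝ) T,
      y₂'' t + (lam - ρ * ζ * u * t / T) * y₂' t
        + (ζ ^ 2 / 4) * (u * t / T) * (u * t / T - 1) * y₂ t = 0)
    (w w' ψ : ℝ → ℝ)
    (hw : ∀ t, w t = y₂' 0 * y₁ t - y₁' 0 * y₂ t)
    (hw' : ∀ t, w' t = y₂' 0 * y₁' t - y₁' 0 * y₂' t)
    (hψ : ∀ t, ψ t = -(2 / ζ ^ 2) * (w' t / w t))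
    (hwne : ∀ t ∈ Icc (0 : ℝ) T, w t ≠ 0) :
    ψ 0 = 0 ∧
    ∀ t ∈ Icc (0 : ℝ) T,
      HasDerivWithinAt ψ
        ((ζ ^ 2 / 2) * ψ t ^ 2 - (lam - ρ * ζ * u * t / T) * ψ t
          + (1 / 2) * (u * t / T) * (u * t / T - 1)) (Icc 0 T) t := by
  obtain rfl : ψ = _ := funext hψ
  refine ⟨by simp [hw', mul_comm], fun t ht => ?_⟩
  have hwd : HasDerivWithinAt w (w' t) (Icc 0 T) t := by
    rw [funext hw, hw']
    exact ((hy₁ t ht).const_mul _).sub ((hy₂ t ht).const_mul _)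
  let w'' : ℝ → ℝ := fun s => y₂' 0 * y₁'' s - y₁' 0 * y₂'' s
  have hw'd : HasDerivWithinAt w' (w'' t) (Icc 0 T) t := by
    rw [funext hw']
    exact ((hy₁' t ht).const_mul _).sub ((hy₂' t ht).const_mul _)
  have hode : w'' t + (lam - ρ * ζ * u * t / T) * w' t
      + (ζ ^ 2 / 4 * (u * t / T) * (u * t / T - 1)) * w t = 0 := by
    rw [hw, hw']
    linear_combination y₂' 0 * hode₁ t ht - y₁' 0 * hode₂ t ht
  refine (hwd.scaled_logDeriv_riccati_of_linearODE (2 / ζ ^ 2) hw'd (hwne t ht) hode).congr_deriv ?_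
  field_simp
  ring

/-- Heston average-price Riccati equation: if `y₁, y₂` solve the linearized
second-order equation `y'' + (λ - ρζut/T) y' + (ζ²/4)(ut/T)(ut/T - 1) y = 0` on
`[0,T]` and the Wronskian-type combination `w(t) = y₂'(0) y₁(t) - y₁'(0) y₂(t)` never
vanishes there, then `ψ = -(2/ζ²) w'/w` satisfies `ψ(0) = 0` and
`ψ' = (ζ²/2) ψ² - (λ - ρζut/T) ψ + (1/2)(ut/T)(ut/T - 1)` on `[0,T]`. -/
theorem heston_average_price_riccati
    (lam θ ζ ρ u T : ℝ) (hζ : ζ ≠ 0) (hT : 0 < T)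
    (y₁ y₁' y₁'' y₂ y₂' y₂'' : ℝ → ℝ)
    (hy₁ : ∀ t ∈ Icc (0 : ℝ) T, HasDerivWithinAt y₁ (y₁' t) (Icc 0 T) t)
    (hy₁' : ∀ t ∈ Icc (0 : ℝ) T, HasDerivWithinAt y₁' (y₁'' t) (Icc 0 T) t)
    (hy₂ : ∀ t ∈ Icc (0 : ℝ) T, HasDerivWithinAt y₂ (y₂' t) (Icc 0 T) t)
    (hy₂' : ∀ t ∈ Icc (0 : ℝ) T, HasDerivWithinAt y₂' (y₂'' t) (Icc 0 T) t)
    (hode₁ : ∀ t ∈ Icc (0 : ℝ) T,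
      y₁'' t + (lam - ρ * ζ * u * t / T) * y₁' t
        + (ζ ^ 2 / 4) * (u * t / T) * (u * t / T - 1) * y₁ t = 0)
    (hode₂ : ∀ t ∈ Icc (0 : ℝ) T,
      y₂'' t + (lam - ρ * ζ * u * t / T) * y₂' t
        + (ζ ^ 2 / 4) * (u * t / T) * (u * t / T - 1) * y₂ t = 0)
    (w w' ψ : ℝ → ℝ)
    (hw : ∀ t, w t = y₂' 0 * y₁ t - y₁' 0 * y₂ t)
    (hw' : ∀ t, w' t = y₂' 0 * y₁' t - y₁' 0 * y₂' t)
    (hψ : ∀ t, ψ t = -(2 / ζ ^ 2) * (w' t / w t))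
    (hwne : ∀ t ∈ Icc (0 : ℝ) T, w t ≠ 0) :
    ψ 0 = 0 ∧
    ∀ t ∈ Icc (0 : ℝ) T,
      HasDerivWithinAt ψ
        ((ζ ^ 2 / 2) * ψ t ^ 2 - (lam - ρ * ζ * u * t / T) * ψ t
          + (1 / 2) * (u * t / T) * (u * t / T - 1)) (Icc 0 T) t :=
  heston_average_price_riccati_general lam ζ ρ u T hζ y₁ y₁' y₁'' y₂ y₂' y₂'' hy₁ hy₁' hy₂ hy₂'
    hode₁ hode₂ w w' ψ hw hw' hψ hwne
end

section
/- Fix real numbers λ, θ, ζ, ρ, u, T with ζ ≠ 0 and T > 0, and let v(t) := 1 + u(t/T - 1). Let y₁, y₂ : ℝ → ℝ be twice differentiable solutions of the linear second-order equation y''(t) + (λ - ρζ·v(t))·y'(t) + (ζ²/4)·v(t)·(v(t) - 1)·y(t) = 0 on [0, T], and set w(t) := y₂'(0)·y₁(t) - y₁'(0)·y₂(t). If w(t) ≠ 0 for all t ∈ [0, T], then ψ(t) := -(2/ζ²)·w'(t)/w(t) satisfies ψ(0) = 0 and the Heston average-strike Riccati equation ψ'(t) = (ζ²/2)·ψ(t)²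 + (ρζ·v(t) - λ)·ψ(t) + (1/2)·v(t)·(v(t) - 1) for all t ∈ [0, T]. -/
open Set

/-- Heston average-strike Riccati equation: with `v(t) = 1 + u(t/T - 1)`, if `y₁, y₂`
solve the linearized second-order equation
`y'' + (λ - ρζ v(t)) y' + (ζ²/4) v(t)(v(t) - 1) y = 0` on `[0,T]` and
`w(t) = y₂'(0) y₁(t) - y₁'(0) y₂(t)` never vanishes there, then `ψ = -(2/ζ²) w'/w`
satisfies `ψ(0) = 0` and `ψ' = (ζ²/2) ψ² + (ρζ v(t) - λ) ψ + (1/2) v(t)(v(t) - 1)`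
on `[0,T]`. -/
theorem heston_average_strike_riccati
    (lam θ ζ ρ u T : ℝ) (hζ : ζ ≠ 0) (hT : 0 < T)
    (v : ℝ → ℝ) (hv : ∀ t, v t = 1 + u * (t / T - 1))
    (y₁ y₁' y₁'' y₂ y₂' y₂'' : ℝ → ℝ)
    (hy₁ : ∀ t ∈ Icc (0 : ℝ) T, HasDerivWithinAt y₁ (y₁' t) (Icc 0 T) t)
    (hy₁' : ∀ t ∈ Icc (0 : ℝ) T, HasDerivWithinAt y₁' (y₁'' t) (Icc 0 T) t)
    (hy₂ : ∀ t ∈ Icc (0 : ℝ) T, HasDerivWithinAt y₂ (y₂' t) (Icc 0 T) t)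
    (hy₂' : ∀ t ∈ Icc (0 : ℝ) T, HasDerivWithinAt y₂' (y₂'' t) (Icc 0 T) t)
    (hode₁ : ∀ t ∈ Icc (0 : ℝ) T,
      y₁'' t + (lam - ρ * ζ * v t) * y₁' t
        + (ζ ^ 2 / 4) * v t * (v t - 1) * y₁ t = 0)
    (hode₂ : ∀ t ∈ Icc (0 : ℝ) T,
      y₂'' t + (lam - ρ * ζ * v t) * y₂' t
        + (ζ ^ 2 / 4) * v t * (v t - 1) * y₂ t = 0)
    (w w' ψ : ℝ → ℝ)
    (hw : ∀ t, w t = y₂' 0 * y₁ t - y₁' 0 * y₂ t)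
    (hw' : ∀ t, w' t = y₂' 0 * y₁' t - y₁' 0 * y₂' t)
    (hψ : ∀ t, ψ t = -(2 / ζ ^ 2) * (w' t / w t))
    (hwne : ∀ t ∈ Icc (0 : ℝ) T, w t ≠ 0) :
    ψ 0 = 0 ∧
    ∀ t ∈ Icc (0 : ℝ) T,
      HasDerivWithinAt ψ
        ((ζ ^ 2 / 2) * ψ t ^ 2 + (ρ * ζ * v t - lam) * ψ t
          + (1 / 2) * v t * (v t - 1)) (Icc 0 T) t := by

  constructor
  · rw [hψ 0, hw' 0]; ring
  · intro t ht
    have hwD : HasDerivWithinAt w (w' t) (Icc 0 T) t := by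
      have := ((hy₁ t ht).const_mul (y₂' 0)).sub ((hy₂ t ht).const_mul (y₁' 0))
      have heq : w = fun s => y₂' 0 * y₁ s - y₁' 0 * y₂ s := funext hw
      rw [heq, hw']
      exact this
    have hw'D : HasDerivWithinAt w'
        (y₂' 0 * y₁'' t - y₁' 0 * y₂'' t) (Icc 0 T) t := by
      have := ((hy₁' t ht).const_mul (y₂' 0)).sub ((hy₂' t ht).const_mul (y₁' 0))
      have heq : w' = fun s => y₂' 0 * y₁' s - y₁' 0 * y₂' s := funext hw'
      rw [heq]
      exact this
    have hwne' := hwne t ht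
    have hψD : HasDerivWithinAt ψ
        (-(2 / ζ ^ 2) * (((y₂' 0 * y₁'' t - y₁' 0 * y₂'' t) * w t - w' t * w' t) / w t ^ 2))
        (Icc 0 T) t := by
      have heq : ψ = fun s => -(2 / ζ ^ 2) * (w' s / w s) := funext hψ
      rw [heq]
      exact (hw'D.div hwD hwne').const_mul _
    convert hψD using 1
    have hode : y₂' 0 * y₁'' t - y₁' 0 * y₂'' t
        = -((lam - ρ * ζ * v t) * w' t) - (ζ ^ 2 / 4) * v t * (v t - 1) * w t := by
      have h1 := hode₁ t ht
      have h2 := hode₂ t ht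
      rw [hw, hw']
      linear_combination y₂' 0 * h1 - y₁' 0 * h2
    rw [hode, hψ t, hw t, hw' t] at *
    field_simp
    ring
end

section
/- Fix real numbers λ > 0, T > 0 and u. Define f₁(t) = t/λ - (1 - e^{-λt})/λ² and f₂(t) = t²/λ - 2t/λ² + 2(1 - e^{-λt})/λ³. Then the function ψ(t) := (u²/(2T²))·f₂(t) - (u/(2T))·f₁(t) satisfies ψ(0) = 0 and the Barndorff-Nielsen–Shephard average-price Riccati equation ψ'(t) = (1/2)·((ut/T)² - ut/T) - λ·ψ(t) for all t ∈ ℝ. -/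
/-!
For `k = 1, 2`, `f_k(t) = ∫₀ᵗ sᵏ e^{-λ(t-s)} ds` solves `y' = tᵏ - λ y`, `y 0 = 0`.
The average-price equation is linear in `ψ` with source `(u²/(2T²)) t² - (u/(2T)) t`,
so `ψ` is the matching combination of `f₂` and `f₁`.
-/

open Real

theorem hasDerivAt_exp_const_mul (c t : ℝ) :
    HasDerivAt (fun s => exp (c * s)) (c * exp (c * t)) t := by
  simpa [mul_comm] using ((hasDerivAt_id t).const_mul c).exp

section LinearRelaxation

variable {lam : ℝ}

theorem hasDerivAt_relaxation_id (hlam : lam ≠ 0) (t : ℝ) :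
    HasDerivAt (fun s => s / lam - (1 - exp (-lam * s)) / lam ^ 2)
      (t - lam * (t / lam - (1 - exp (-lam * t)) / lam ^ 2)) t := by
  refine (((hasDerivAt_id t).div_const lam).sub
    (((hasDerivAt_const t 1).sub (hasDerivAt_exp_const_mul (-lam) t)).div_const
      (lam ^ 2))).congr_deriv ?_
  field_simp
  ring

theorem hasDerivAt_relaxation_sq (hlam : lam ≠ 0) (t : ℝ) :
    HasDerivAt (fun s => s ^ 2 / lam - 2 * s / lam ^ 2 + 2 * (1 - exp (-lam * s)) / lam ^ 3)
      (t ^ 2 - lam * (t ^ 2 / lam - 2 * t / lam ^ 2 + 2 * (1 - exp (-lam * t)) / lam ^ 3)) t := by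
  refine ((((hasDerivAt_pow 2 t).div_const lam).sub
    (((hasDerivAt_id t).const_mul 2).div_const (lam ^ 2))).add
    ((((hasDerivAt_const t 1).sub (hasDerivAt_exp_const_mul (-lam) t)).const_mul 2).div_const
      (lam ^ 3))).congr_deriv ?_
  field_simp
  ring

end LinearRelaxation

theorem bns_average_price_riccati_solution_general
    (lam T u : ℝ) (hlam : 0 < lam)
    (f₁ f₂ ψ : ℝ → ℝ)
    (hf₁ : ∀ t, f₁ t = t / lam - (1 - Real.exp (-lam * t)) / lam ^ 2)
    (hf₂ : ∀ t, f₂ t = t ^ 2 / lam - 2 * t / lam ^ 2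
      + 2 * (1 - Real.exp (-lam * t)) / lam ^ 3)
    (hψ : ∀ t, ψ t = (u ^ 2 / (2 * T ^ 2)) * f₂ t - (u / (2 * T)) * f₁ t) :
    ψ 0 = 0 ∧
    ∀ t : ℝ, HasDerivAt ψ ((1 / 2) * ((u * t / T) ^ 2 - u * t / T) - lam * ψ t) t := by
  refine ⟨by simp [hψ, hf₁, hf₂], fun t => ?_⟩
  have h₁ : HasDerivAt f₁ (t - lam * f₁ t) t := by
    rw [funext hf₁]; exact hasDerivAt_relaxation_id hlam.ne' t
  have h₂ : HasDerivAt f₂ (t ^ 2 - lam * f₂ t) t := by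
    rw [funext hf₂]; exact hasDerivAt_relaxation_sq hlam.ne' t
  rw [funext hψ]
  refine ((h₂.const_mul (u ^ 2 / (2 * T ^ 2))).sub (h₁.const_mul (u / (2 * T)))).congr_deriv ?_
  ring

/-- Explicit solution of the Barndorff-Nielsen–Shephard average-price Riccati
equation: with `f₁(t) = t/λ - (1 - e^{-λt})/λ²` and
`f₂(t) = t²/λ - 2t/λ² + 2(1 - e^{-λt})/λ³`, the function
`ψ(t) = (u²/(2T²)) f₂(t) - (u/(2T)) f₁(t)` satisfies `ψ(0) = 0` and
`ψ'(t) = (1/2)((ut/T)² - ut/T) - λ ψ(t)` for all `t`. -/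
theorem bns_average_price_riccati_solution
    (lam T u : ℝ) (hlam : 0 < lam) (hT : 0 < T)
    (f₁ f₂ ψ : ℝ → ℝ)
    (hf₁ : ∀ t, f₁ t = t / lam - (1 - Real.exp (-lam * t)) / lam ^ 2)
    (hf₂ : ∀ t, f₂ t = t ^ 2 / lam - 2 * t / lam ^ 2
      + 2 * (1 - Real.exp (-lam * t)) / lam ^ 3)
    (hψ : ∀ t, ψ t = (u ^ 2 / (2 * T ^ 2)) * f₂ t - (u / (2 * T)) * f₁ t) :
    ψ 0 = 0 ∧
    ∀ t : ℝ, HasDerivAt ψ ((1 / 2) * ((u * t / T) ^ 2 - u * t / T) - lam * ψ t) t :=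
  bns_average_price_riccati_solution_general lam T u hlam f₁ f₂ ψ hf₁ hf₂ hψ
end
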